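/- arXiv:2507.16631 — 4 statements merged into one kernel-verified Lean document; each statement's English description precedes it below -/
import Mathlib

section
/- In the DG scheme for pure aggregation with symmetric triangulation and D₃-symmetric quadrature, the discrete mass M_h(t) = ∫₀^{v_max} v n_h(v,t) dv is constant in time: taking the test function φ(v) = v and summing over all cells, the birth and death quadrature sums cancel exactly. -/
open Classical

/-!
With `φ(v) = v`, the sums over all cells of the birth terms and of the death terms are
quadratures over the whole triangulation, because the cells' birth regions and death regions
both tile it. The birth integrand `(u + w) β(w, u) n(w) n(u)` is `f(u, w) + f(w, u)` for the
death integrand `f(u, w) = u β(u, w) n(u) n(w)`, and a swap-symmetric triangulation with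
swap-equivariant quadratures does not see the swap; so the birth sum is twice the death sum,
and the factor `1/2` makes the total mass flux vanish.
-/

lemma sum_comp_of_involutive {ι M : Type*} [AddCommMonoid M] {s : Finset ι} {σ : ι → ι}
    (hσ : Function.Involutive σ) (hs : ∀ x ∈ s, σ x ∈ s) (F : ι → M) :
    ∑ x ∈ s, F (σ x) = ∑ x ∈ s, F x :=
  Finset.sum_nbij' σ σ hs hs (fun x _ => hσ x) (fun x _ => hσ x) (fun _ _ => rfl)

lemma image_swap_involutive {α : Type*} :
    Function.Involutive (Set.image (Prod.swap : α × α → α × α)) := fun T => by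
  simp [Set.image_image]

section SwapInvariantQuadrature

variable {α : Type*} {𝒯 : Finset (Set (α × α))} {Q : Set (α × α) → (α × α → ℝ) → ℝ}

lemma sum_quadrature_comp_swap (hclosed : ∀ T ∈ 𝒯, Prod.swap '' T ∈ 𝒯)
    (hQswap : ∀ T (f : α × α → ℝ), Q (Prod.swap '' T) f = Q T (f ∘ Prod.swap))
    (f : α × α → ℝ) :
    ∑ T ∈ 𝒯, Q T (f ∘ Prod.swap) = ∑ T ∈ 𝒯, Q T f := by
  simp_rw [← hQswap]
  exact sum_comp_of_involutive image_swap_involutive hclosed (Q · f)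

lemma sum_quadrature_add_swap (hclosed : ∀ T ∈ 𝒯, Prod.swap '' T ∈ 𝒯)
    (hQadd : ∀ T (f f' : α × α → ℝ), Q T (fun q => f q + f' q) = Q T f + Q T f')
    (hQswap : ∀ T (f : α × α → ℝ), Q (Prod.swap '' T) f = Q T (f ∘ Prod.swap))
    (f : α × α → ℝ) :
    ∑ T ∈ 𝒯, Q T (fun q => f q + f q.swap) = 2 * ∑ T ∈ 𝒯, Q T f := by
  simp only [hQadd, Finset.sum_add_distrib]
  rw [show (fun q : α × α => f q.swap) = f ∘ Prod.swap from rfl,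
    sum_quadrature_comp_swap hclosed hQswap]
  ring

lemma aggregation_mass_flux_eq_zero {𝒯 : Finset (Set (ℝ × ℝ))}
    {Q : Set (ℝ × ℝ) → (ℝ × ℝ → ℝ) → ℝ} (hclosed : ∀ T ∈ 𝒯, Prod.swap '' T ∈ 𝒯)
    (hQadd : ∀ T (f f' : ℝ × ℝ → ℝ), Q T (fun q => f q + f' q) = Q T f + Q T f')
    (hQswap : ∀ T (f : ℝ × ℝ → ℝ), Q (Prod.swap '' T) f = Q T (f ∘ Prod.swap))
    {β : ℝ → ℝ → ℝ} (hβsymm : ∀ u w : ℝ, β u w = β w u) (n : ℝ → ℝ) :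
    (1/2) * ∑ T ∈ 𝒯, Q T (fun q => (q.1 + q.2) * β q.2 q.1 * n q.2 * n q.1)
      - ∑ T ∈ 𝒯, Q T (fun q => q.1 * β q.1 q.2 * n q.1 * n q.2) = 0 := by
  set death : ℝ × ℝ → ℝ := fun q => q.1 * β q.1 q.2 * n q.1 * n q.2
  have birth_eq : (fun q : ℝ × ℝ => (q.1 + q.2) * β q.2 q.1 * n q.2 * n q.1) =
      fun q => death q + death q.swap := by
    funext q
    simp only [death, Prod.fst_swap, Prod.snd_swap, hβsymm q.1 q.2]
    ring
  rw [birth_eq, sum_quadrature_add_swap hclosed hQadd hQswap death]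
  ring

theorem DG_aggregation_mass_conservation_general
    (L k : ℕ) (hk : 1 ≤ k) (g : ℕ → ℝ)
    (β : ℝ → ℝ → ℝ) (hβsymm : ∀ u w : ℝ, β u w = β w u)
    (A B : ℕ → Set (ℝ × ℝ))
    (𝒯 : Finset (Set (ℝ × ℝ)))
    (hclosed : ∀ T ∈ 𝒯, Prod.swap '' T ∈ 𝒯)
    (hrefA : ∀ f : Set (ℝ × ℝ) → ℝ,
      (∑ i ∈ Finset.range L, ∑ T ∈ 𝒯.filter (fun T => T ⊆ A i), f T) = ∑ T ∈ 𝒯, f T)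
    (hrefB : ∀ f : Set (ℝ × ℝ) → ℝ,
      (∑ i ∈ Finset.range L, ∑ T ∈ 𝒯.filter (fun T => T ⊆ B i), f T) = ∑ T ∈ 𝒯, f T)
    (Q : Set (ℝ × ℝ) → (ℝ × ℝ → ℝ) → ℝ)
    (hQadd : ∀ T (f f' : ℝ × ℝ → ℝ), Q T (fun q => f q + f' q) = Q T f + Q T f')
    (hQswap : ∀ T (f : ℝ × ℝ → ℝ), Q (Prod.swap '' T) f = Q T (f ∘ Prod.swap))
    (nh : ℝ → ℝ → ℝ)
    (hscheme : ∀ t : ℝ, ∀ i ∈ Finset.range L, ∀ φ : Polynomial ℝ, φ.natDegree ≤ k →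
      HasDerivAt (fun s => ∫ v in Set.Icc (g i) (g (i + 1)), nh v s * φ.eval v)
        ((1/2) * (∑ T ∈ 𝒯.filter (fun T => T ⊆ A i),
            Q T (fun q => φ.eval (q.1 + q.2) * β q.2 q.1 * nh q.2 t * nh q.1 t))
          - ∑ T ∈ 𝒯.filter (fun T => T ⊆ B i),
            Q T (fun q => φ.eval q.1 * β q.1 q.2 * nh q.1 t * nh q.2 t)) t) :
    ∀ t₁ t₂ : ℝ,
      (∑ i ∈ Finset.range L, ∫ v in Set.Icc (g i) (g (i + 1)), v * nh v t₁)
        = ∑ i ∈ Finset.range L, ∫ v in Set.Icc (g i) (g (i + 1)), v * nh v t₂ := by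
  have hX : (Polynomial.X : Polynomial ℝ).natDegree ≤ k := Polynomial.natDegree_X_le.trans hk
  have mass_deriv : ∀ t, HasDerivAt
      (fun s => ∑ i ∈ Finset.range L, ∫ v in Set.Icc (g i) (g (i + 1)), v * nh v s) 0 t := by
    intro t
    have h := HasDerivAt.fun_sum fun i hi => hscheme t i hi Polynomial.X hX
    simp only [Polynomial.eval_X, Finset.sum_sub_distrib, ← Finset.mul_sum, hrefA, hrefB] at h
    rw [aggregation_mass_flux_eq_zero hclosed hQadd hQswap hβsymm (nh · t)] at h
    simpa only [mul_comm] using h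
  exact is_const_of_deriv_eq_zero (fun t => (mass_deriv t).differentiableAt)
    (fun t => (mass_deriv t).deriv)

/-- Discrete mass conservation for the conservative DG aggregation scheme: with a
swap-symmetric common refinement `𝒯` of the birth regions `{A_i}` and death regions
`{B_i}`, swap-equivariant additive quadrature functionals `Q`, and a symmetric kernel
`β`, the discrete mass `M_h(t) = ∫₀^{v_max} v n_h(v,t) dv` is constant in time. -/
theorem DG_aggregation_mass_conservation
    (L k : ℕ) (hL : 0 < L) (hk : 1 ≤ k) (vmax : ℝ) (g : ℕ → ℝ)
    (hg0 : g 0 = 0) (hgL : g L = vmax) (hmono : ∀ i < L, g i < g (i + 1))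
    (β : ℝ → ℝ → ℝ) (hβsymm : ∀ u w : ℝ, β u w = β w u)
    (A B : ℕ → Set (ℝ × ℝ))
    (hA : ∀ i, A i = {q : ℝ × ℝ | 0 ≤ q.1 ∧ 0 ≤ q.2 ∧ g i ≤ q.1 + q.2 ∧ q.1 + q.2 ≤ g (i + 1)})
    (hB : ∀ i, B i = {q : ℝ × ℝ | 0 ≤ q.2 ∧ g i ≤ q.1 ∧ q.1 ≤ g (i + 1) ∧ q.1 + q.2 ≤ vmax})
    (𝒯 : Finset (Set (ℝ × ℝ)))
    (hclosed : ∀ T ∈ 𝒯, Prod.swap '' T ∈ 𝒯)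
    (hrefA : ∀ f : Set (ℝ × ℝ) → ℝ,
      (∑ i ∈ Finset.range L, ∑ T ∈ 𝒯.filter (fun T => T ⊆ A i), f T) = ∑ T ∈ 𝒯, f T)
    (hrefB : ∀ f : Set (ℝ × ℝ) → ℝ,
      (∑ i ∈ Finset.range L, ∑ T ∈ 𝒯.filter (fun T => T ⊆ B i), f T) = ∑ T ∈ 𝒯, f T)
    (Q : Set (ℝ × ℝ) → (ℝ × ℝ → ℝ) → ℝ)
    (hQadd : ∀ T (f f' : ℝ × ℝ → ℝ), Q T (fun q => f q + f' q) = Q T f + Q T f')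
    (hQswap : ∀ T (f : ℝ × ℝ → ℝ), Q (Prod.swap '' T) f = Q T (f ∘ Prod.swap))
    (nh : ℝ → ℝ → ℝ)
    (hscheme : ∀ t : ℝ, ∀ i ∈ Finset.range L, ∀ φ : Polynomial ℝ, φ.natDegree ≤ k →
      HasDerivAt (fun s => ∫ v in Set.Icc (g i) (g (i + 1)), nh v s * φ.eval v)
        ((1/2) * (∑ T ∈ 𝒯.filter (fun T => T ⊆ A i),
            Q T (fun q => φ.eval (q.1 + q.2) * β q.2 q.1 * nh q.2 t * nh q.1 t))
          - ∑ T ∈ 𝒯.filter (fun T => T ⊆ B i),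
            Q T (fun q => φ.eval q.1 * β q.1 q.2 * nh q.1 t * nh q.2 t)) t) :
    ∀ t₁ t₂ : ℝ,
      (∑ i ∈ Finset.range L, ∫ v in Set.Icc (g i) (g (i + 1)), v * nh v t₁)
        = ∑ i ∈ Finset.range L, ∫ v in Set.Icc (g i) (g (i + 1)), v * nh v t₂ :=
  DG_aggregation_mass_conservation_general L k hk g β hβsymm A B 𝒯 hclosed hrefA hrefB Q hQadd
    hQswap nh hscheme
end SwapInvariantQuadrature
end

section
/- In the DG scheme for pure breakage where the death term is discretized via the same common refinement E⁰ and quadrature as the birth term, the discrete mass M_h(t) = ∫₀^{v_max} v n_h(v,t) dv is constant in time. -/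
open MeasureTheory Set

open Classical

/-!
Testing the scheme with `φ(v) = v` removes the quadrature term on each cell, since its integrand
vanishes identically. Summed over the cells, the birth and the death sums each run over the
common refinement `ℰ` exactly once, with the same quadrature of the same integrand, so they
cancel: the discrete mass has zero derivative at every time and is therefore constant.
-/

theorem Finset.sum_sub_sum_filter_eq_zero_of_refines {ι α M : Type*} [AddCommGroup M]
    (s : Finset ι) (ℰ : Finset α) (P R : ι → α → Prop) [∀ i, DecidablePred (P i)]
    [∀ i, DecidablePred (R i)] (f : α → M)
    (hP : ∑ i ∈ s, ∑ E ∈ ℰ.filter (P i), f E = ∑ E ∈ ℰ, f E)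
    (hR : ∑ i ∈ s, ∑ E ∈ ℰ.filter (R i), f E = ∑ E ∈ ℰ, f E) :
    ∑ i ∈ s, (∑ E ∈ ℰ.filter (P i), f E - ∑ E ∈ ℰ.filter (R i), f E) = 0 := by
  rw [Finset.sum_sub_distrib, hP, hR, sub_self]

theorem DG_breakage_mass_conservation_general
    (L k : ℕ) (hk : 1 ≤ k) (g : ℕ → ℝ)
    (p : ℝ → ℝ → ℝ) (γ : ℝ → ℝ)
    (C D : ℕ → Set (ℝ × ℝ))
    (ℰ : Finset (Set (ℝ × ℝ)))
    (hrefC : ∀ f : Set (ℝ × ℝ) → ℝ,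
      (∑ i ∈ Finset.range L, ∑ E ∈ ℰ.filter (fun E => E ⊆ C i), f E) = ∑ E ∈ ℰ, f E)
    (hrefD : ∀ f : Set (ℝ × ℝ) → ℝ,
      (∑ i ∈ Finset.range L, ∑ E ∈ ℰ.filter (fun E => E ⊆ D i), f E) = ∑ E ∈ ℰ, f E)
    (Q : Set (ℝ × ℝ) → (ℝ × ℝ → ℝ) → ℝ)
    (QI : ℕ → (ℝ → ℝ) → ℝ)
    (hQIzero : ∀ i (f : ℝ → ℝ), (∀ v, f v = 0) → QI i f = 0)
    (nh : ℝ → ℝ → ℝ)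
    (hscheme : ∀ t : ℝ, ∀ i ∈ Finset.range L, ∀ φ : Polynomial ℝ, φ.natDegree ≤ k →
      HasDerivAt (fun s => ∫ v in Set.Icc (g i) (g (i + 1)), nh v s * φ.eval v)
        ((∑ E ∈ ℰ.filter (fun E => E ⊆ C i),
            Q E (fun q => φ.eval q.1 * p q.1 q.2 * γ q.2 * nh q.2 t))
          - (∑ E ∈ ℰ.filter (fun E => E ⊆ D i),
            Q E (fun q => q.1 * p q.1 q.2 * γ q.2 * nh q.2 t))
          - QI i (fun v => (φ.eval v - v) * γ v * nh v t)) t) :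
    ∀ t₁ t₂ : ℝ,
      (∑ i ∈ Finset.range L, ∫ v in Set.Icc (g i) (g (i + 1)), v * nh v t₁)
        = ∑ i ∈ Finset.range L, ∫ v in Set.Icc (g i) (g (i + 1)), v * nh v t₂ := by
  have hmass : ∀ t, HasDerivAt (fun s => ∑ i ∈ Finset.range L,
      ∫ v in Set.Icc (g i) (g (i + 1)), v * nh v s) 0 t := by
    intro t
    let F : Set (ℝ × ℝ) → ℝ := fun E => Q E (fun q => q.1 * p q.1 q.2 * γ q.2 * nh q.2 t)
    have hcell : ∀ i ∈ Finset.range L,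
        HasDerivAt (fun s => ∫ v in Set.Icc (g i) (g (i + 1)), v * nh v s)
          (∑ E ∈ ℰ.filter (fun E => E ⊆ C i), F E
            - ∑ E ∈ ℰ.filter (fun E => E ⊆ D i), F E) t := by
      intro i hi
      have h := hscheme t i hi Polynomial.X (Polynomial.natDegree_X_le.trans hk)
      simp only [Polynomial.eval_X, sub_self, zero_mul, hQIzero i (fun _ => 0) fun _ => rfl,
        sub_zero] at h
      simpa only [mul_comm (nh _ _)] using h
    simpa only [Finset.sum_sub_sum_filter_eq_zero_of_refines _ ℰ _ _ F (hrefC F) (hrefD F)]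
      using HasDerivAt.fun_sum hcell
  exact is_const_of_deriv_eq_zero (fun t => (hmass t).differentiableAt) (fun t => (hmass t).deriv)

/-- Discrete mass conservation for the conservative DG breakage scheme: with a common
refinement `ℰ` of the birth strips `{C_i}` and death strips `{D_i}` of the breakage
region, a single quadrature rule per element, the discrete mass
`M_h(t) = ∫₀^{v_max} v n_h(v,t) dv` is constant in time. -/
theorem DG_breakage_mass_conservation
    (L k : ℕ) (hL : 0 < L) (hk : 1 ≤ k) (vmax : ℝ) (g : ℕ → ℝ)
    (hg0 : g 0 = 0) (hgL : g L = vmax) (hmono : ∀ i < L, g i < g (i + 1))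
    (p : ℝ → ℝ → ℝ) (γ : ℝ → ℝ)
    (C D : ℕ → Set (ℝ × ℝ))
    (hC : ∀ i, C i = {q : ℝ × ℝ | g i ≤ q.1 ∧ q.1 ≤ g (i + 1) ∧ q.1 ≤ q.2 ∧ q.2 ≤ vmax})
    (hD : ∀ i, D i = {q : ℝ × ℝ | g i ≤ q.2 ∧ q.2 ≤ g (i + 1) ∧ 0 ≤ q.1 ∧ q.1 ≤ q.2})
    (ℰ : Finset (Set (ℝ × ℝ)))
    (hrefC : ∀ f : Set (ℝ × ℝ) → ℝ,
      (∑ i ∈ Finset.range L, ∑ E ∈ ℰ.filter (fun E => E ⊆ C i), f E) = ∑ E ∈ ℰ, f E)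
    (hrefD : ∀ f : Set (ℝ × ℝ) → ℝ,
      (∑ i ∈ Finset.range L, ∑ E ∈ ℰ.filter (fun E => E ⊆ D i), f E) = ∑ E ∈ ℰ, f E)
    (Q : Set (ℝ × ℝ) → (ℝ × ℝ → ℝ) → ℝ)
    (QI : ℕ → (ℝ → ℝ) → ℝ)
    (hQIzero : ∀ i (f : ℝ → ℝ), (∀ v, f v = 0) → QI i f = 0)
    (nh : ℝ → ℝ → ℝ)
    (hscheme : ∀ t : ℝ, ∀ i ∈ Finset.range L, ∀ φ : Polynomial ℝ, φ.natDegree ≤ k →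
      HasDerivAt (fun s => ∫ v in Set.Icc (g i) (g (i + 1)), nh v s * φ.eval v)
        ((∑ E ∈ ℰ.filter (fun E => E ⊆ C i),
            Q E (fun q => φ.eval q.1 * p q.1 q.2 * γ q.2 * nh q.2 t))
          - (∑ E ∈ ℰ.filter (fun E => E ⊆ D i),
            Q E (fun q => q.1 * p q.1 q.2 * γ q.2 * nh q.2 t))
          - QI i (fun v => (φ.eval v - v) * γ v * nh v t)) t) :
    ∀ t₁ t₂ : ℝ,
      (∑ i ∈ Finset.range L, ∫ v in Set.Icc (g i) (g (i + 1)), v * nh v t₁)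
        = ∑ i ∈ Finset.range L, ∫ v in Set.Icc (g i) (g (i + 1)), v * nh v t₂ :=
  DG_breakage_mass_conservation_general L k hk g p γ C D ℰ hrefC hrefD Q QI hQIzero nh hscheme
end

section
/- Forward-Euler positivity of moments for growth with upwind flux: suppose n_h^m ≥ 0, G ≥ 0, S ≥ 0, and n_h^{m+1} is produced by one forward Euler step of the upwind DG scheme for ∂ₜn + ∂ᵥ(G n) = S using Gauss–Lobatto quadrature with weights ϖ_α^G > 0. If Δt ≤ (ϖ_{N_G}^G / ‖G‖_{L^∞}) Δv, then ∫_{I_i} v^s n_h^{m+1}(v) dv ≥ 0 for every cell I_i and every integer 0 ≤ s ≤ k. -/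
/-!
Split off the right-endpoint Gauss–Lobatto node from the mass term. Every other
contribution to the update (the remaining quadrature nodes, the drift and source
quadratures, the upwind inflow) is nonnegative because `n_h^m`, `G`, `S` and the weights
are, and the outflow `Δt G(v_{i+1/2}) n_h(v_{i+1/2}) v_{i+1/2}^s` is absorbed by the
endpoint term `Δv_i ϖ_{N_G} v_{i+1/2}^s n_h(v_{i+1/2})` because the CFL condition
gives `Δt G ≤ Δv_i ϖ_{N_G}`.
-/

open MeasureTheory Set

section Quadrature

open Finset

variable {N : ℕ} {ω x : ℕ → ℝ} {f : ℝ → ℝ} {h : ℝ} {t : Set ℝ}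

lemma quadrature_nonneg (hh : 0 ≤ h) (hω : ∀ α < N, 0 < ω α) (hx : ∀ α < N, x α ∈ t)
    (hf : ∀ v ∈ t, 0 ≤ f v) :
    0 ≤ h * ∑ α ∈ range N, ω α * f (x α) :=
  mul_nonneg hh <| sum_nonneg fun α hα ↦
    mul_nonneg (hω α (mem_range.1 hα)).le (hf _ (hx α (mem_range.1 hα)))

lemma mul_last_node_le_quadrature (hN : 0 < N) (hh : 0 ≤ h) (hω : ∀ α < N, 0 < ω α)
    (hx : ∀ α < N, x α ∈ t) (hf : ∀ v ∈ t, 0 ≤ f v) :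
    h * (ω (N - 1) * f (x (N - 1))) ≤ h * ∑ α ∈ range N, ω α * f (x α) :=
  mul_le_mul_of_nonneg_left
    (single_le_sum (f := fun α ↦ ω α * f (x α))
      (fun α hα ↦ mul_nonneg (hω α (mem_range.1 hα)).le (hf _ (hx α (mem_range.1 hα))))
      (mem_range.2 (Nat.sub_lt hN one_pos))) hh

end Quadrature

lemma mul_le_of_cfl {Δt Δv h w C G : ℝ} (hΔt : 0 ≤ Δt) (hC : 0 < C) (hG : G ≤ C)
    (hw : 0 ≤ w) (hΔv : Δv ≤ h) (hcfl : Δt ≤ w / C * Δv) :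
    Δt * G ≤ h * w :=
  calc Δt * G ≤ Δt * C := mul_le_mul_of_nonneg_left hG hΔt
    _ ≤ w / C * Δv * C := mul_le_mul_of_nonneg_right hcfl hC.le
    _ = w * Δv := by field_simp
    _ ≤ h * w := by rw [mul_comm h]; exact mul_le_mul_of_nonneg_left hΔv hw

/-- The outflow `c y p` is paid for by the endpoint part `h w p y` of the mass term. -/
lemma forwardEuler_nonneg {Δt Q A I B c y p h w : ℝ} (hΔt : 0 ≤ Δt)
    (hQ : h * (w * (p * y)) ≤ Q) (hA : 0 ≤ A) (hI : 0 ≤ I) (hB : 0 ≤ B) (hpy : 0 ≤ p * y)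
    (hc : Δt * c ≤ h * w) :
    0 ≤ Q + Δt * (A + I - c * y * p + B) := by
  nlinarith [mul_le_mul_of_nonneg_right hc hpy, mul_nonneg hΔt (add_nonneg (add_nonneg hA hI) hB)]

lemma Icc_subset_Icc_of_le_succ {L : ℕ} {g : ℕ → ℝ} {a b : ℝ}
    (hg0 : g 0 = a) (hgL : g L = b) (hmono : ∀ i < L, g i ≤ g (i + 1)) {i : ℕ} (hi : i < L) :
    Icc (g i) (g (i + 1)) ⊆ Icc a b := by
  have hg : MonotoneOn g (Iic L) := monotoneOn_of_le_succ ordConnected_Iic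
    fun m _ _ hm ↦ hmono m (Nat.lt_of_succ_le hm)
  subst hg0 hgL
  exact Icc_subset_Icc (hg (mem_Iic.2 (Nat.zero_le _)) (mem_Iic.2 hi.le) (Nat.zero_le _))
    (hg (mem_Iic.2 hi) (mem_Iic.2 le_rfl) hi)

lemma upwind_trace_nonneg {L : ℕ} {g : ℕ → ℝ} {n : ℕ → ℝ → ℝ} {bc : ℝ} (hbc : 0 ≤ bc)
    (hmono : ∀ i < L, g i ≤ g (i + 1)) (hn : ∀ i < L, ∀ v ∈ Icc (g i) (g (i + 1)), 0 ≤ n i v)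
    {i : ℕ} (hi : i < L) :
    0 ≤ if i = 0 then bc else n (i - 1) (g i) := by
  split_ifs with h0
  · exact hbc
  · have hprev : i - 1 + 1 = i := by omega
    simpa only [hprev] using hn (i - 1) (by omega) _
      (right_mem_Icc.2 (hmono (i - 1) (by omega)))

theorem DG_growth_forward_Euler_moment_positivity_general
    (L k NG : ℕ) (hNG : k + 2 ≤ NG)
    (vmax : ℝ) (g : ℕ → ℝ)
    (hg0 : g 0 = 0) (hgL : g L = vmax) (hmono : ∀ i < L, g i < g (i + 1))
    (G S : ℝ → ℝ)
    (hGpos : ∀ v ∈ Set.Icc (0:ℝ) vmax, 0 ≤ G v)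
    (hSpos : ∀ v ∈ Set.Icc (0:ℝ) vmax, 0 ≤ S v)
    (ω : ℕ → ℝ) (hω : ∀ α < NG, 0 < ω α)
    (node : ℕ → ℕ → ℝ)
    (hnode : ∀ i < L, ∀ α < NG, node i α ∈ Set.Icc (g i) (g (i + 1)))
    (hnodeR : ∀ i < L, node i (NG - 1) = g (i + 1))
    (QGL : ℕ → (ℝ → ℝ) → ℝ)
    (hQGL : ∀ i (f : ℝ → ℝ),
      QGL i f = (g (i + 1) - g i) * ∑ α ∈ Finset.range NG, ω α * f (node i α))
    (nh0 nh1 : ℕ → ℝ → ℝ)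
    (hnh0 : ∀ i < L, ∀ v ∈ Set.Icc (g i) (g (i + 1)), 0 ≤ nh0 i v)
    (bc : ℝ) (hbc : 0 ≤ bc)
    (Δt Δv CG : ℝ) (hΔt : 0 < Δt) (hCG : 0 < CG)
    (hGbound : ∀ v ∈ Set.Icc (0:ℝ) vmax, G v ≤ CG)
    (hΔv' : ∀ i < L, Δv ≤ g (i + 1) - g i)
    (hcfl : Δt ≤ ω (NG - 1) / CG * Δv)
    (hupdate : ∀ i < L, ∀ s ≤ k,
      (∫ v in Set.Icc (g i) (g (i + 1)), v ^ s * nh1 i v)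
        = QGL i (fun v => v ^ s * nh0 i v)
          + Δt * (QGL i (fun v => (s : ℝ) * v ^ (s - 1) * G v * nh0 i v)
              + G (g i) * (if i = 0 then bc else nh0 (i - 1) (g i)) * (g i) ^ s
              - G (g (i + 1)) * nh0 i (g (i + 1)) * (g (i + 1)) ^ s
              + QGL i (fun v => S v * v ^ s))) :
    ∀ i < L, ∀ s ≤ k, 0 ≤ ∫ v in Set.Icc (g i) (g (i + 1)), v ^ s * nh1 i v := by
  intro i hi s hs
  have hmono' i (hi : i < L) : g i ≤ g (i + 1) := (hmono i hi).le
  have hcell := Icc_subset_Icc_of_le_succ hg0 hgL hmono' hi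
  have hleft : g i ∈ Icc (g i) (g (i + 1)) := left_mem_Icc.2 (hmono' i hi)
  have hright : g (i + 1) ∈ Icc (g i) (g (i + 1)) := right_mem_Icc.2 (hmono' i hi)
  have hwidth : 0 ≤ g (i + 1) - g i := sub_nonneg.2 (hmono' i hi)
  rw [hupdate i hi s hs, hQGL, hQGL, hQGL]
  refine forwardEuler_nonneg hΔt.le ?_
    (quadrature_nonneg hwidth hω (hnode i hi) fun v hv ↦ mul_nonneg (mul_nonneg
      (mul_nonneg s.cast_nonneg (pow_nonneg (hcell hv).1 _)) (hGpos v (hcell hv)))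
      (hnh0 i hi v hv))
    (mul_nonneg (mul_nonneg (hGpos _ (hcell hleft)) (upwind_trace_nonneg hbc hmono' hnh0 hi))
      (pow_nonneg (hcell hleft).1 s))
    (quadrature_nonneg hwidth hω (hnode i hi) fun v hv ↦
      mul_nonneg (hSpos v (hcell hv)) (pow_nonneg (hcell hv).1 s))
    (mul_nonneg (pow_nonneg (hcell hright).1 s) (hnh0 i hi _ hright))
    (mul_le_of_cfl hΔt.le hCG (hGbound _ (hcell hright)) (hω _ (by omega)).le (hΔv' i hi) hcfl)
  simpa only [hnodeR i hi] using mul_last_node_le_quadrature (f := fun v ↦ v ^ s * nh0 i v)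
    (by omega) hwidth hω (hnode i hi) fun v hv ↦ mul_nonneg (pow_nonneg (hcell hv).1 s)
      (hnh0 i hi v hv)

/-- Forward-Euler positivity of moments for the upwind DG growth–nucleation scheme
with Gauss–Lobatto quadrature: if `n_h^m ≥ 0`, `G ≥ 0`, `S ≥ 0`, and
`Δt ≤ (ϖ_{N_G} / ‖G‖_∞) Δv`, then every moment `∫_{I_i} v^s n_h^{m+1} dv`,
`0 ≤ s ≤ k`, is nonnegative on every cell. -/
theorem DG_growth_forward_Euler_moment_positivity
    (L k NG : ℕ) (hL : 0 < L) (hk : 1 ≤ k) (hNG : k + 2 ≤ NG)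
    (vmax : ℝ) (hvmax : 0 < vmax) (g : ℕ → ℝ)
    (hg0 : g 0 = 0) (hgL : g L = vmax) (hmono : ∀ i < L, g i < g (i + 1))
    (G S : ℝ → ℝ)
    (hGpos : ∀ v ∈ Set.Icc (0:ℝ) vmax, 0 ≤ G v)
    (hSpos : ∀ v ∈ Set.Icc (0:ℝ) vmax, 0 ≤ S v)
    (ω : ℕ → ℝ) (hω : ∀ α < NG, 0 < ω α)
    (node : ℕ → ℕ → ℝ)
    (hnode : ∀ i < L, ∀ α < NG, node i α ∈ Set.Icc (g i) (g (i + 1)))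
    (hnodeL : ∀ i < L, node i 0 = g i)
    (hnodeR : ∀ i < L, node i (NG - 1) = g (i + 1))
    (QGL : ℕ → (ℝ → ℝ) → ℝ)
    (hQGL : ∀ i (f : ℝ → ℝ),
      QGL i f = (g (i + 1) - g i) * ∑ α ∈ Finset.range NG, ω α * f (node i α))
    (hexact : ∀ i < L, ∀ P : Polynomial ℝ, P.natDegree ≤ 2 * NG - 3 →
      (∫ v in Set.Icc (g i) (g (i + 1)), P.eval v) = QGL i (fun v => P.eval v))
    (nh0 nh1 : ℕ → ℝ → ℝ)
    (hpoly0 : ∀ i < L, ∃ P : Polynomial ℝ, P.natDegree ≤ k ∧ ∀ v, nh0 i v = P.eval v)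
    (hnh0 : ∀ i < L, ∀ v ∈ Set.Icc (g i) (g (i + 1)), 0 ≤ nh0 i v)
    (bc : ℝ) (hbc : 0 ≤ bc)
    (Δt Δv CG : ℝ) (hΔt : 0 < Δt) (hCG : 0 < CG)
    (hGbound : ∀ v ∈ Set.Icc (0:ℝ) vmax, G v ≤ CG)
    (hΔv : 0 < Δv) (hΔv' : ∀ i < L, Δv ≤ g (i + 1) - g i)
    (hcfl : Δt ≤ ω (NG - 1) / CG * Δv)
    (hupdate : ∀ i < L, ∀ s ≤ k,
      (∫ v in Set.Icc (g i) (g (i + 1)), v ^ s * nh1 i v)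
        = QGL i (fun v => v ^ s * nh0 i v)
          + Δt * (QGL i (fun v => (s : ℝ) * v ^ (s - 1) * G v * nh0 i v)
              + G (g i) * (if i = 0 then bc else nh0 (i - 1) (g i)) * (g i) ^ s
              - G (g (i + 1)) * nh0 i (g (i + 1)) * (g (i + 1)) ^ s
              + QGL i (fun v => S v * v ^ s))) :
    ∀ i < L, ∀ s ≤ k, 0 ≤ ∫ v in Set.Icc (g i) (g (i + 1)), v ^ s * nh1 i v :=
  DG_growth_forward_Euler_moment_positivity_general L k NG hNG vmax g hg0 hgL hmono G S hGpos hSpos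
    ω hω node hnode hnodeR QGL hQGL nh0 nh1 hnh0 bc hbc Δt Δv CG hΔt hCG hGbound hΔv' hcfl hupdate
end

section
/- Accuracy of the moment-conserving limiter: there is a constant C(k,s), depending only on the polynomial degree k and the moment index s (and the normalized node positions of the (k+1)-point Gauss–Legendre rule), such that for any cell I_i ⊂ (0,∞) and any n_h ∈ P^k(I_i) with ∫_{I_i} v^s n_h dv ≥ 0, the limited polynomial ñ_h = θ(n_h + m) satisfies ‖n_h − ñ_h‖_{L^∞(I_i)} ≤ C(k,s) · m, where m = −min_{I_i} n_h. -/
/-!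
With `Q = P + m ≥ 0` on the cell, `W = ∫ v^s` and `D = ∫ v^s Q = N + m W`, the error is
`P - (N / D) Q = m (W Q / D) - m`, so it suffices to bound `Q(x) W ≤ C D` uniformly in the cell.
On `[0, 1]` this is a compactness statement: the moment `q ↦ ∫₀¹ t^s q` is a linear functional,
positive on the closed cone of nonzero polynomials of degree `≤ k` that are nonnegative on
`[0, 1]`, hence bounded below there by a multiple of the coefficient norm, which dominates
`sup_{[0,1]} |q|`. A cell `[a, b] ⊂ [0, ∞)` is reduced to `[0, 1]` by `v = (b - a) t + a`,
using `v ≥ b t` to compare the weights and `W ≤ b^s (b - a)`.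
-/

open MeasureTheory Set Polynomial

theorem intervalIntegrable_pow_mul_eval (s : ℕ) (p : ℝ[X]) (a b : ℝ) :
    IntervalIntegrable (fun v => v ^ s * p.eval v) volume a b :=
  (by fun_prop : Continuous fun v : ℝ => v ^ s * p.eval v).intervalIntegrable a b

theorem exists_norm_le_mul_of_pos_on_cone {E : Type*} [NormedAddCommGroup E] [NormedSpace ℝ E]
    [FiniteDimensional ℝ E] {K : Set E} (hK : IsClosed K)
    (hsmul : ∀ r : ℝ, 0 < r → ∀ c ∈ K, r • c ∈ K) (L : E →L[ℝ] ℝ)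
    (hpos : ∀ c ∈ K, c ≠ 0 → 0 < L c) :
    ∃ C > 0, ∀ c ∈ K, ‖c‖ ≤ C * L c := by
  have hcpt : IsCompact (K ∩ Metric.sphere 0 1) := (isCompact_sphere 0 1).inter_left hK
  obtain ⟨ε, hε, hmin⟩ := hcpt.exists_forall_le' L.continuous.continuousOn
    fun c hc => hpos c hc.1 (ne_zero_of_mem_unit_sphere ⟨c, hc.2⟩)
  refine ⟨ε⁻¹, inv_pos.2 hε, fun c hc => ?_⟩
  rcases eq_or_ne c 0 with rfl | hc0
  · simp
  have hnorm : 0 < ‖c‖ := norm_pos_iff.2 hc0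
  have hunit : ‖c‖⁻¹ • c ∈ K ∩ Metric.sphere 0 1 :=
    ⟨hsmul _ (inv_pos.2 hnorm) c hc, by simp [norm_smul, hnorm.ne']⟩
  have hε_le := hmin _ hunit
  rw [map_smul, smul_eq_mul] at hε_le
  rw [le_inv_mul_iff₀ hε]
  calc ε * ‖c‖ ≤ ‖c‖⁻¹ * L c * ‖c‖ := by gcongr
    _ = L c := by field_simp

noncomputable def momentOnUnitInterval (s : ℕ) : ℝ[X] →ₗ[ℝ] ℝ where
  toFun p := ∫ t in (0 : ℝ)..1, t ^ s * p.eval t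
  map_add' p q := by
    simp only [eval_add, mul_add]
    exact intervalIntegral.integral_add (intervalIntegrable_pow_mul_eval s p 0 1)
      (intervalIntegrable_pow_mul_eval s q 0 1)
  map_smul' r p := by
    simp only [eval_smul, smul_eq_mul, mul_left_comm _ r, intervalIntegral.integral_const_mul,
      RingHom.id_apply]

theorem momentOnUnitInterval_apply (s : ℕ) (p : ℝ[X]) :
    momentOnUnitInterval s p = ∫ t in (0 : ℝ)..1, t ^ s * p.eval t := rfl

theorem momentOnUnitInterval_pos (s : ℕ) {p : ℝ[X]} (hp : p ≠ 0)
    (hnn : ∀ t ∈ Icc (0 : ℝ) 1, 0 ≤ p.eval t) : 0 < momentOnUnitInterval s p := by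
  have hnn' : 0 ≤ᵐ[volume.restrict (uIoc (0 : ℝ) 1)] fun t => t ^ s * p.eval t := by
    rw [uIoc_of_le zero_le_one]
    filter_upwards [ae_restrict_mem measurableSet_Ioc] with t ht
    exact mul_nonneg (pow_nonneg ht.1.le s) (hnn t (Ioc_subset_Icc_self ht))
  rw [momentOnUnitInterval_apply, intervalIntegral.integral_pos_iff_support_of_nonneg_ae' hnn'
    (intervalIntegrable_pow_mul_eval s p 0 1)]
  refine ⟨zero_lt_one, ?_⟩
  -- off the finitely many roots of `p`, the integrand is positive on `(0, 1]`
  have hsupp : Ioc (0 : ℝ) 1 \ {t | p.IsRoot t} ⊆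
      Function.support (fun t => t ^ s * p.eval t) ∩ Ioc 0 1 :=
    fun t ht => ⟨mul_ne_zero (pow_ne_zero s ht.1.1.ne') ht.2, ht.1⟩
  calc (0 : ENNReal) < volume (Ioc (0 : ℝ) 1) := by simp
    _ = volume (Ioc (0 : ℝ) 1 \ {t | p.IsRoot t}) :=
      (measure_sdiff_null ((finite_setOfPred_isRoot hp).measure_zero volume)).symm
    _ ≤ _ := measure_mono hsupp

theorem abs_eval_degreeLTEquiv_symm_le {n : ℕ} (c : Fin n → ℝ) {x : ℝ} (hx : |x| ≤ 1) :
    |((degreeLTEquiv ℝ n).symm c : ℝ[X]).eval x| ≤ n * ‖c‖ := by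
  rw [eval_eq_sum_degreeLTEquiv (Submodule.coe_mem _), Subtype.coe_eta,
    LinearEquiv.apply_symm_apply]
  calc |∑ i, c i * x ^ (i : ℕ)| ≤ ∑ i, |c i * x ^ (i : ℕ)| := Finset.abs_sum_le_sum_abs _ _
    _ ≤ ∑ _i : Fin n, ‖c‖ := by
      refine Finset.sum_le_sum fun i _ => ?_
      rw [abs_mul, abs_pow]
      calc |c i| * |x| ^ (i : ℕ) ≤ ‖c‖ * 1 :=
            mul_le_mul (norm_le_pi_norm c i) (pow_le_one₀ (abs_nonneg x) hx) (by positivity)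
              (norm_nonneg c)
        _ = ‖c‖ := mul_one _
    _ = n * ‖c‖ := by simp

theorem exists_eval_le_mul_momentOnUnitInterval (k s : ℕ) :
    ∃ C > 0, ∀ q : ℝ[X], q.natDegree ≤ k → (∀ t ∈ Icc (0 : ℝ) 1, 0 ≤ q.eval t) →
      ∀ x ∈ Icc (0 : ℝ) 1, q.eval x ≤ C * momentOnUnitInterval s q := by
  let toPoly : (Fin (k + 1) → ℝ) →ₗ[ℝ] ℝ[X] :=
    (degreeLT ℝ (k + 1)).subtype ∘ₗ (degreeLTEquiv ℝ (k + 1)).symm.toLinearMap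
  let K := {c | ∀ t ∈ Icc (0 : ℝ) 1, 0 ≤ (toPoly c).eval t}
  have hK : IsClosed K := by
    simp only [K, ofPred_forall]
    exact isClosed_biInter fun t _ =>
      isClosed_le continuous_const (leval t ∘ₗ toPoly).continuous_of_finiteDimensional
  have hsmul : ∀ r : ℝ, 0 < r → ∀ c ∈ K, r • c ∈ K := fun r hr c hc t ht => by
    simpa only [map_smul, eval_smul, smul_eq_mul] using mul_nonneg hr.le (hc t ht)
  have hinj : Function.Injective toPoly :=
    Subtype.val_injective.comp (degreeLTEquiv ℝ (k + 1)).symm.injective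
  obtain ⟨C, hC, hnorm⟩ := exists_norm_le_mul_of_pos_on_cone hK hsmul
    (LinearMap.toContinuousLinearMap (momentOnUnitInterval s ∘ₗ toPoly))
    fun c hc hc0 => momentOnUnitInterval_pos s ((map_ne_zero_iff _ hinj).2 hc0) hc
  refine ⟨(k + 1) * C, by positivity, fun q hq hnn x hx => ?_⟩
  have hqmem : q ∈ degreeLT ℝ (k + 1) := by
    rwa [degreeLT_succ_eq_degreeLE, mem_degreeLE, ← natDegree_le_iff_degree_le]
  set c := degreeLTEquiv ℝ (k + 1) ⟨q, hqmem⟩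
  have hc : toPoly c = q := by simp [toPoly, c]
  have hx' : |x| ≤ 1 := abs_le.2 ⟨by linarith [hx.1], hx.2⟩
  calc q.eval x ≤ |q.eval x| := le_abs_self _
    _ ≤ (k + 1) * ‖c‖ := by
      rw [← hc]
      exact_mod_cast abs_eval_degreeLTEquiv_symm_le c hx'
    _ ≤ (k + 1) * (C * momentOnUnitInterval s q) := by
      gcongr
      simpa [hc] using hnorm c (by simpa [K, hc] using hnn)
    _ = _ := by ring

theorem integral_pow_le_mul_sub {a b : ℝ} (ha : 0 ≤ a) (hab : a ≤ b) (s : ℕ) :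
    ∫ v in a..b, v ^ s ≤ b ^ s * (b - a) := by
  calc ∫ v in a..b, v ^ s ≤ ∫ _ in a..b, b ^ s :=
        intervalIntegral.integral_mono_on hab ((continuous_pow s).intervalIntegrable _ _)
          intervalIntegrable_const fun v hv => pow_le_pow_left₀ (ha.trans hv.1) hv.2 s
    _ = b ^ s * (b - a) := by rw [intervalIntegral.integral_const, smul_eq_mul, mul_comm]

theorem integral_pow_pos {a b : ℝ} (ha : 0 ≤ a) (hab : a < b) (s : ℕ) :
    0 < ∫ v in a..b, v ^ s :=
  intervalIntegral.intervalIntegral_pos_of_pos_on ((continuous_pow s).intervalIntegrable _ _)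
    (fun _ hv => pow_pos (ha.trans_lt hv.1) s) hab

theorem mul_integral_unitInterval_le_integral_pow_mul {a b : ℝ} (ha : 0 ≤ a) (hab : a ≤ b)
    (s : ℕ) {g : ℝ → ℝ} (hg : Continuous g) (hnn : ∀ v ∈ Icc a b, 0 ≤ g v) :
    (b - a) * (b ^ s * ∫ t in (0 : ℝ)..1, t ^ s * g ((b - a) * t + a))
      ≤ ∫ v in a..b, v ^ s * g v := by
  have haffine : Continuous fun t : ℝ => (b - a) * t + a := by fun_prop
  have hmem : ∀ t ∈ Icc (0 : ℝ) 1, (b - a) * t + a ∈ Icc a b := fun t ht =>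
    ⟨by nlinarith [ht.1], by nlinarith [ht.2]⟩
  rw [← intervalIntegral.integral_const_mul]
  have hsubst := intervalIntegral.smul_integral_comp_mul_add (a := 0) (b := 1)
    (fun v => v ^ s * g v) (b - a) a
  simp only [mul_zero, zero_add, mul_one, sub_add_cancel, smul_eq_mul] at hsubst
  rw [← hsubst]
  refine mul_le_mul_of_nonneg_left ?_ (sub_nonneg.2 hab)
  refine intervalIntegral.integral_mono_on zero_le_one
    ((continuous_const.mul ((continuous_pow s).mul (hg.comp haffine))).intervalIntegrable _ _)
    ((((continuous_pow s).comp haffine).mul (hg.comp haffine)).intervalIntegrable _ _)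
    fun t ht => ?_
  have hbt : b * t ≤ (b - a) * t + a := by nlinarith [ht.1, ht.2]
  calc b ^ s * (t ^ s * g ((b - a) * t + a)) = (b * t) ^ s * g ((b - a) * t + a) := by ring
    _ ≤ ((b - a) * t + a) ^ s * g ((b - a) * t + a) := by
      gcongr
      · exact hnn _ (hmem t ht)
      · exact mul_nonneg (ha.trans hab) ht.1

theorem abs_sub_div_mul_add_le {p m N W C : ℝ} (hm : 0 < m) (hN : 0 ≤ N) (hW : 0 < W)
    (hpm : 0 ≤ p + m) (hC : 0 ≤ C) (h : (p + m) * W ≤ C * (N + m * W)) :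
    |p - N / (N + m * W) * (p + m)| ≤ (C + 1) * m := by
  have hD : 0 < N + m * W := by positivity
  have herr : p - N / (N + m * W) * (p + m) = m * ((p + m) * W / (N + m * W)) - m := by
    field_simp
    ring
  have hratio : (p + m) * W / (N + m * W) ≤ C := (div_le_iff₀ hD).2 h
  have hratio' : 0 ≤ (p + m) * W / (N + m * W) := by positivity
  rw [herr, abs_le]
  constructor <;> nlinarith

theorem exists_eval_mul_integral_pow_le_mul_integral (k s : ℕ) :
    ∃ C > 0, ∀ a b : ℝ, 0 ≤ a → a < b → ∀ Q : ℝ[X], Q.natDegree ≤ k →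
      (∀ v ∈ Icc a b, 0 ≤ Q.eval v) → ∀ x ∈ Icc a b,
        Q.eval x * ∫ v in a..b, v ^ s ≤ C * ∫ v in a..b, v ^ s * Q.eval v := by
  obtain ⟨C, hC, hunit⟩ := exists_eval_le_mul_momentOnUnitInterval k s
  refine ⟨C, hC, fun a b ha hab Q hQ hnn x hx => ?_⟩
  have hΔ : 0 < b - a := sub_pos.2 hab
  set q := Q.comp (Polynomial.C (b - a) * X + Polynomial.C a)
  have hq : ∀ t, q.eval t = Q.eval ((b - a) * t + a) := fun t => by simp [q]
  have hqdeg : q.natDegree ≤ k :=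
    natDegree_comp_le.trans ((Nat.mul_le_mul hQ natDegree_linear_le).trans_eq (mul_one k))
  have hqnn : ∀ t ∈ Icc (0 : ℝ) 1, 0 ≤ q.eval t := fun t ht =>
    hq t ▸ hnn _ ⟨by nlinarith [ht.1], by nlinarith [ht.2]⟩
  set tx := (x - a) / (b - a)
  have htx : tx ∈ Icc (0 : ℝ) 1 :=
    ⟨div_nonneg (by linarith [hx.1]) hΔ.le, (div_le_one hΔ).2 (by linarith [hx.2])⟩
  have hQx : Q.eval x = q.eval tx := by
    rw [hq, mul_div_cancel₀ _ hΔ.ne', sub_add_cancel]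
  calc Q.eval x * ∫ v in a..b, v ^ s ≤ Q.eval x * (b ^ s * (b - a)) :=
        mul_le_mul_of_nonneg_left (integral_pow_le_mul_sub ha hab.le s) (hnn x hx)
    _ = (b - a) * b ^ s * q.eval tx := by rw [hQx]; ring
    _ ≤ (b - a) * b ^ s * (C * momentOnUnitInterval s q) :=
        mul_le_mul_of_nonneg_left (hunit q hqdeg hqnn tx htx)
          (mul_nonneg hΔ.le (pow_nonneg (ha.trans hab.le) s))
    _ = C * ((b - a) * (b ^ s * ∫ t in (0 : ℝ)..1, t ^ s * Q.eval ((b - a) * t + a))) := by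
        simp only [momentOnUnitInterval_apply, hq]
        ring
    _ ≤ C * ∫ v in a..b, v ^ s * Q.eval v := by
        gcongr
        exact mul_integral_unitInterval_le_integral_pow_mul ha hab.le s Q.continuous hnn

theorem limiter_accuracy_general
    (k s : ℕ) :
    ∃ C : ℝ, 0 < C ∧
      ∀ a b : ℝ, 0 ≤ a → a < b →
      ∀ P : Polynomial ℝ, P.natDegree ≤ k →
      ∀ m : ℝ, 0 < m →
      IsLeast ((fun v => P.eval v) '' Set.Icc a b) (-m) →
      0 ≤ (∫ v in Set.Icc a b, v ^ s * P.eval v) →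
      ∀ x ∈ Set.Icc a b,
        |P.eval x
            - (∫ v in Set.Icc a b, v ^ s * P.eval v)
                / ((∫ v in Set.Icc a b, v ^ s * P.eval v) + m * ∫ v in Set.Icc a b, v ^ s)
              * (P.eval x + m)| ≤ C * m := by
  obtain ⟨C, hC, hcell⟩ := exists_eval_mul_integral_pow_le_mul_integral k s
  refine ⟨C + 1, by positivity, fun a b ha hab P hP m hm hmin hN x hx => ?_⟩
  simp only [integral_Icc_eq_integral_Ioc, ← intervalIntegral.integral_of_le hab.le] at hN ⊢
  set Q := P + Polynomial.C m
  have hQnn : ∀ v ∈ Icc a b, 0 ≤ Q.eval v := fun v hv => by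
    simpa [Q, neg_le_iff_add_nonneg] using hmin.2 ⟨v, hv, rfl⟩
  have hQdeg : Q.natDegree ≤ k := (natDegree_add_le _ _).trans (by simp [hP])
  have hmoment : ∫ v in a..b, v ^ s * Q.eval v
      = (∫ v in a..b, v ^ s * P.eval v) + m * ∫ v in a..b, v ^ s := by
    rw [← intervalIntegral.integral_const_mul, ← intervalIntegral.integral_add
      (intervalIntegrable_pow_mul_eval s P a b)
      ((intervalIntegral.intervalIntegrable_pow s).const_mul m)]
    refine intervalIntegral.integral_congr fun v _ => ?_
    simp only [Q, eval_add, eval_C]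
    ring
  have hQx : Q.eval x = P.eval x + m := by simp [Q]
  refine abs_sub_div_mul_add_le hm hN (integral_pow_pos ha hab s) (hQx ▸ hQnn x hx) hC.le ?_
  simpa only [hmoment, hQx] using hcell a b ha hab Q hQdeg hQnn x hx

/-- Accuracy of the moment-conserving limiter: there is a constant `C(k,s)` depending
only on the degree `k` and moment index `s` such that for any cell `[a,b] ⊂ [0,∞)` and
any `n_h ∈ P^k` with nonnegative `s`-th moment, the limited polynomial
`ñ_h = θ(n_h + m)` satisfies `‖n_h − ñ_h‖_{L^∞} ≤ C(k,s)·m`, with `m = −min n_h > 0`. -/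
theorem limiter_accuracy
    (k s : ℕ) (hs : s ≤ k) :
    ∃ C : ℝ, 0 < C ∧
      ∀ a b : ℝ, 0 ≤ a → a < b →
      ∀ P : Polynomial ℝ, P.natDegree ≤ k →
      ∀ m : ℝ, 0 < m →
      IsLeast ((fun v => P.eval v) '' Set.Icc a b) (-m) →
      0 ≤ (∫ v in Set.Icc a b, v ^ s * P.eval v) →
      ∀ x ∈ Set.Icc a b,
        |P.eval x
            - (∫ v in Set.Icc a b, v ^ s * P.eval v)
                / ((∫ v in Set.Icc a b, v ^ s * P.eval v) + m * ∫ v in Set.Icc a b, v ^ s)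
              * (P.eval x + m)| ≤ C * m :=
  limiter_accuracy_general k s
end
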